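/- arXiv:2401.15972 — 2 statements merged into one kernel-verified Lean document; each statement's English description precedes it below -/
import Mathlib

section
/- For every n ≥ 1, the cube of the 3-norm of the Fibonacci vector q_n satisfies ∑_{i=1}^n F_i^3 = (1/2)(F_n · F_{n+1}^2 + (−1)^{n+1} · F_{n−1} + 1). -/
/-!
Induction on `n`: doubling the new term `F_{n+2}^3` and using `F_{n+3} = F_{n+1} + F_{n+2}`,
the increment of the right-hand side differs from it by `F_{n+2}` times Cassini's identity
`F_{n+2} F_n - F_{n+1}^2 = (-1)^{n+1}`.
-/

open Finset Nat

theorem Nat.cast_fib_add_two {R : Type*} [Semiring R] (n : ℕ) :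
    (fib (n + 2) : R) = fib n + fib (n + 1) := by
  rw [fib_add_two, cast_add]

theorem Nat.fib_add_two_mul_fib_sub_fib_add_one_sq {R : Type*} [CommRing R] (n : ℕ) :
    (fib (n + 2) : R) * fib n - (fib (n + 1) : R) ^ 2 = (-1) ^ (n + 1) := by
  induction n with
  | zero => simp
  | succ n ih =>
    linear_combination (-1 : R) * ih + (fib (n + 1) : R) * cast_fib_add_two (R := R) (n + 1)
      - (fib (n + 2) : R) * cast_fib_add_two (R := R) n

theorem two_mul_sum_Icc_fib_pow_three {R : Type*} [CommRing R] (n : ℕ) :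
    2 * ∑ i ∈ Icc 1 (n + 1), (fib i : R) ^ 3 =
      fib (n + 1) * fib (n + 2) ^ 2 + (-1) ^ n * fib n + 1 := by
  induction n with
  | zero => norm_num
  | succ n ih =>
    rw [sum_Icc_succ_top (by omega), mul_add, ih, cast_fib_add_two (n + 1)]
    linear_combination (fib (n + 2) : R) * fib_add_two_mul_fib_sub_fib_add_one_sq (R := R) n
      + ((fib (n + 2) : R) ^ 2 - (-1) ^ n) * cast_fib_add_two (R := R) n

/-- For `n ≥ 1`,
`∑_{i=1}^n (F i)^3 = (1/2) * (F n * (F (n+1))^2 + (-1)^(n+1) * F (n-1) + 1)`. -/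
theorem fib_threenorm_cube (n : ℕ) (hn : 1 ≤ n) :
    ∑ i ∈ Finset.Icc 1 n, (Nat.fib i : ℝ) ^ 3 =
      (1 / 2) * ((Nat.fib n : ℝ) * (Nat.fib (n + 1) : ℝ) ^ 2 +
        (-1 : ℝ) ^ (n + 1) * (Nat.fib (n - 1) : ℝ) + 1) := by
  obtain ⟨m, rfl⟩ := exists_add_of_le hn
  rw [add_comm 1 m, add_tsub_cancel_right]
  linear_combination (1 / 2 : ℝ) * two_mul_sum_Icc_fib_pow_three (R := ℝ) m
end

section
/- For all n ≥ 0, r ≥ 1, and every real p > 0, the p-th power of the p-distance between the (n+3,r)-Fibonacci vector x = (F_{n+4}, …, F_{n+r+3}) and the (n,r)-Fibonacci vector y = (F_{n+1}, …, F_{n+r}) equals F_3^p · ∑_{i=1}^r F_{n+i+1}^p; that is, ∑_{i=1}^r (F_{n+i+3} − F_{n+i})^p = 2^p · ∑_{i=1}^r F_{n+i+1}^p. -/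
theorem Nat.fib_add_three (n : ℕ) : fib (n + 3) = fib n + 2 * fib (n + 1) := by
  rw [fib_add_two, fib_add_two (n := n)]
  ring

theorem Nat.cast_fib_add_three_sub_cast_fib {R : Type*} [Ring R] (n : ℕ) :
    (fib (n + 3) : R) - fib n = 2 * fib (n + 1) := by
  rw [fib_add_three]
  push_cast
  abel

theorem fib_pdist_three_apart_general (n r : ℕ) (p : ℝ) :
    ∑ i ∈ Finset.Icc 1 r, ((Nat.fib (n + i + 3) : ℝ) - (Nat.fib (n + i) : ℝ)) ^ p =
      (2 : ℝ) ^ p * ∑ i ∈ Finset.Icc 1 r, (Nat.fib (n + i + 1) : ℝ) ^ p := by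
  simp_rw [Nat.cast_fib_add_three_sub_cast_fib, Finset.mul_sum]
  exact Finset.sum_congr rfl fun i _ ↦ Real.mul_rpow zero_le_two (Nat.cast_nonneg _)

/-- For `n ≥ 0`, `r ≥ 1` and real `p > 0`, the `p`-th power of
the `p`-distance between `x = q_{n+3,r}` and `y = q_{n,r}` equals
`F 3 ^ p * ∑_{i=1}^r F (n+i+1) ^ p`, i.e.
`∑_{i=1}^r (F (n+i+3) - F (n+i)) ^ p = 2 ^ p * ∑_{i=1}^r F (n+i+1) ^ p`. -/
theorem fib_pdist_three_apart (n r : ℕ) (hr : 1 ≤ r) (p : ℝ) (hp : 0 < p) :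
    ∑ i ∈ Finset.Icc 1 r, ((Nat.fib (n + i + 3) : ℝ) - (Nat.fib (n + i) : ℝ)) ^ p =
      (2 : ℝ) ^ p * ∑ i ∈ Finset.Icc 1 r, (Nat.fib (n + i + 1) : ℝ) ^ p :=
  fib_pdist_three_apart_general n r p
end
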